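/- arXiv:math/0210180 — 2 statements merged into one kernel-verified Lean document; each statement's English description precedes it below -/
import Mathlib

section
/- Let κ ∈ ℂ with κ ∉ ℝ≥0 (κ is not a nonnegative real number), and let v, w ∈ E. Then the set of pairs (μ, n) ∈ Q × ℤ≥0 satisfying the equation ∥μ∥² + 2⟨v,μ⟩ + 2i⟨w,μ⟩ = 2κn (that is, |μ|² + 2(λ,μ) = 2κn) is finite. -/
open RealInnerProductSpace

/-!
Write `κ = a + bi` and `n` for the integer of a solution `(μ, n)`. Since `κ ∉ ℝ≥0` there is a real `c`
with `a ≤ c b`; subtracting `c` times the imaginary part of the equation from the real part gives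
`‖μ‖² = ⟪2 (c w - v), μ⟫ + 2 (a - c b) n ≤ ⟪2 (c w - v), μ⟫`, so `μ` lies in a fixed ball.
A ball meets the lattice `Q` in finitely many points, and `n` is determined by `μ` because `κ ≠ 0`.
-/

theorem Complex.exists_re_le_mul_im {κ : ℂ} (hκ : ∀ x : ℝ, 0 ≤ x → (x : ℂ) ≠ κ) :
    ∃ c : ℝ, κ.re ≤ c * κ.im := by
  by_cases him : κ.im = 0
  · refine ⟨0, ?_⟩
    by_contra! hre
    rw [zero_mul] at hre
    exact hκ κ.re hre.le (Complex.ext rfl (by simp [him]))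
  · exact ⟨κ.re / κ.im, (div_mul_cancel₀ _ him).ge⟩

theorem norm_le_of_sq_le_inner {F : Type*} [NormedAddCommGroup F] [InnerProductSpace ℝ F]
    {u x : F} (h : ‖x‖ ^ 2 ≤ ⟪u, x⟫) : ‖x‖ ≤ ‖u‖ := by
  have hux : ‖x‖ * ‖x‖ ≤ ‖u‖ * ‖x‖ := by
    nlinarith [real_inner_le_norm u x]
  rcases (norm_nonneg x).eq_or_lt with hx | hx
  · exact hx ▸ norm_nonneg u
  · exact le_of_mul_le_mul_right hux hx

theorem norm_le_of_sq_add_inner_eq {F : Type*} [NormedAddCommGroup F] [InnerProductSpace ℝ F]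
    {v w μ : F} {a b c t : ℝ} (hc : a ≤ c * b) (ht : 0 ≤ t)
    (hre : ‖μ‖ ^ 2 + 2 * ⟪v, μ⟫ = 2 * a * t) (him : 2 * ⟪w, μ⟫ = 2 * b * t) :
    ‖μ‖ ≤ ‖(2 : ℝ) • (c • w - v)‖ := by
  apply norm_le_of_sq_le_inner
  rw [real_inner_smul_left, inner_sub_left, real_inner_smul_left]
  linarith [mul_le_mul_of_nonneg_right hc ht, congrArg (c * ·) him]

theorem Complex.ofReal_add_ofReal_mul_I_eq_iff {x y : ℝ} {z : ℂ} :
    (x : ℂ) + (y : ℂ) * Complex.I = z ↔ x = z.re ∧ y = z.im := by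
  rw [Complex.ext_iff]
  simp

/-- If `κ ∈ ℂ` is not a nonnegative real number, then the set of
pairs `(μ, n) ∈ Q × ℤ≥0` with `‖μ‖² + 2⟪v,μ⟫ + 2i⟪w,μ⟫ = 2κn` is finite. -/
theorem stmt_2 {E : Type*} [NormedAddCommGroup E] [InnerProductSpace ℝ E]
    [FiniteDimensional ℝ E] {r : ℕ} (b : Module.Basis (Fin r) ℝ E)
    (Q : AddSubgroup E) (hQ : Q = AddSubgroup.closure (Set.range b))
    (v w : E) (κ : ℂ) (hκ : ∀ x : ℝ, 0 ≤ x → (x : ℂ) ≠ κ) :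
    {p : E × ℕ | p.1 ∈ Q ∧
      ((‖p.1‖ ^ 2 + 2 * ⟪v, p.1⟫ : ℝ) : ℂ) + ((2 * ⟪w, p.1⟫ : ℝ) : ℂ) * Complex.I
        = 2 * κ * (p.2 : ℂ)}.Finite := by
  obtain ⟨c, hc⟩ := Complex.exists_re_le_mul_im hκ
  have hκ0 : (2 * κ : ℂ) ≠ 0 := mul_ne_zero two_ne_zero fun h => hκ 0 le_rfl (by simp [h])
  refine Set.Finite.of_finite_image (f := Prod.fst) ?_ ?_
  · refine ((ZSpan.setFinite_inter b
      (Metric.isBounded_closedBall (x := 0) (r := ‖(2 : ℝ) • (c • w - v)‖))).subset ?_)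
    rintro _ ⟨p, ⟨hpQ, hp⟩, rfl⟩
    rw [Complex.ofReal_add_ofReal_mul_I_eq_iff] at hp
    simp only [Complex.mul_re, Complex.mul_im, Complex.natCast_re, Complex.natCast_im,
      Complex.re_ofNat, Complex.im_ofNat] at hp
    refine ⟨mem_closedBall_zero_iff.mpr
      (norm_le_of_sq_add_inner_eq hc p.2.cast_nonneg (by linarith [hp.1]) (by linarith [hp.2])), ?_⟩
    rwa [SetLike.mem_coe, ← Submodule.mem_toAddSubgroup, Submodule.span_int_eq_addSubgroupClosure,
      ← hQ]
  · rintro p ⟨-, hp⟩ q ⟨-, hq⟩ hpq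
    rw [hpq] at hp
    exact Prod.ext hpq (Nat.cast_injective (mul_left_cancel₀ hκ0 (hp.symm.trans hq)))
end

section
/- Let 𝔤 be a perfect Lie algebra over ℂ (i.e. ⁅𝔤,𝔤⁆ = 𝔤; for instance any finite-dimensional complex simple Lie algebra) and let V be a module over the polynomial loop algebra 𝔤[ε]. Then the annihilator subspaces form an increasing chain: V(1) ⊆ V(2) ⊆ V(3) ⊆ ⋯, i.e. V(N) ⊆ V(N+1) for every N ≥ 1. -/
/-!
Write a word of degree `N + 1` as `(ε^k x) w` with `w` of degree `N + 1 - k`. For `k = 1`,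
`w` has degree `N ≥ 1` and already kills `v`. For `k ≥ 2`, perfectness writes `x` as a sum of
brackets `⁅y, z⁆`, and `ε^k ⁅y, z⁆ = ⁅ε^{k-1} y, ε z⁆` gives
`(ε^k ⁅y, z⁆) w v = (ε^{k-1} y)(ε z) w v - (ε z)(ε^{k-1} y) w v`: the second term vanishes
because `(ε^{k-1} y) w` has degree `N`, the first by induction on `k`.
-/

open TensorProduct

variable (𝔤 : Type*) [LieRing 𝔤] [LieAlgebra ℂ 𝔤]
variable (V : Type*) [AddCommGroup V] [Module ℂ V]
  [LieRingModule (Polynomial ℂ ⊗[ℂ] 𝔤) V]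

/-- `V(N)`: the set of vectors of a `𝔤[ε]`-module `V` annihilated by every product
`(ε^{k₁}x₁)⋯(ε^{k_m}x_m)` with `m ≥ 1`, `kᵢ ≥ 1`, `k₁ + ⋯ + k_m = N`; i.e. the
annihilator in `V` of the degree-`N` component `U(𝔤₊)^N` of `U(𝔤₊)`, `𝔤₊ = ε𝔤[ε]`. -/
noncomputable def loopAnn (N : ℕ) : Set V :=
  {v : V | ∀ l : List (ℕ × 𝔤), l ≠ [] → (∀ p ∈ l, 1 ≤ p.1) →
    (l.map Prod.fst).sum = N →
    l.foldr
      (fun p w => ⁅(((Polynomial.X : Polynomial ℂ) ^ p.1) ⊗ₜ[ℂ] p.2 :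
        Polynomial ℂ ⊗[ℂ] 𝔤), w⁆) v = 0}

open Polynomial

theorem pow_tmul_lie {R A L : Type*} [CommRing R] [CommRing A] [Algebra R A] [LieRing L]
    [LieAlgebra R L] (a : A) (j k : ℕ) (y z : L) :
    (a ^ (j + k)) ⊗ₜ[R] ⁅y, z⁆ = ⁅((a ^ j) ⊗ₜ[R] y : A ⊗[R] L), (a ^ k) ⊗ₜ[R] z⁆ := by
  rw [LieAlgebra.ExtendScalars.bracket_tmul, pow_add]

theorem LieAlgebra.induction_on_lie_of_perfect {R L : Type*} [CommRing R] [LieRing L]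
    [LieAlgebra R L] (h : ⁅(⊤ : LieIdeal R L), (⊤ : LieIdeal R L)⁆ = ⊤) {p : L → Prop}
    (zero : p 0) (add : ∀ x y, p x → p y → p (x + y)) (lie : ∀ y z : L, p ⁅y, z⁆) (x : L) :
    p x := by
  have hx : x ∈ Submodule.span R {m | ∃ y ∈ (⊤ : LieIdeal R L), ∃ z ∈ (⊤ : LieIdeal R L),
      ⁅y, z⁆ = m} := by
    rw [← LieSubmodule.lieIdeal_oper_eq_linear_span', h]
    trivial
  induction hx using Submodule.closure_induction with
  | zero => exact zero
  | add x y _ _ hx hy => exact add x y hx hy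
  | smul_mem r _ hm =>
    obtain ⟨y, -, z, -, rfl⟩ := hm
    rw [← smul_lie]
    exact lie _ _

section LoopAlgebra

variable {𝔤 V}

noncomputable def loopWord (l : List (ℕ × 𝔤)) (v : V) : V :=
  l.foldr (fun p w => ⁅(((X : ℂ[X]) ^ p.1) ⊗ₜ[ℂ] p.2 : ℂ[X] ⊗[ℂ] 𝔤), w⁆) v

omit [Module ℂ V] in
theorem mem_loopAnn_iff {N : ℕ} {v : V} :
    v ∈ loopAnn 𝔤 V N ↔ ∀ (k : ℕ) (x : 𝔤) (l : List (ℕ × 𝔤)), 1 ≤ k → (∀ p ∈ l, 1 ≤ p.1) →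
      k + (l.map Prod.fst).sum = N →
      ⁅(((X : ℂ[X]) ^ k) ⊗ₜ[ℂ] x : ℂ[X] ⊗[ℂ] 𝔤), loopWord l v⁆ = 0 := by
  constructor
  · intro hv k x l hk hl hsum
    exact hv ((k, x) :: l) (List.cons_ne_nil _ _) (by simpa [hk] using hl) (by simpa using hsum)
  · rintro hv (_ | ⟨⟨k, x⟩, l⟩) hne hl hsum
    · exact absurd rfl hne
    · exact hv k x l (hl _ List.mem_cons_self) (fun p hp => hl p (List.mem_cons_of_mem _ hp))
        (by simpa using hsum)

omit [Module ℂ V] in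
theorem lie_loopWord_eq_zero_of_mem_loopAnn
    (hperf : ⁅(⊤ : LieIdeal ℂ 𝔤), (⊤ : LieIdeal ℂ 𝔤)⁆ = ⊤) {N : ℕ} (hN : 1 ≤ N) {v : V}
    (hv : v ∈ loopAnn 𝔤 V N) {k : ℕ} (hk : 1 ≤ k) :
    ∀ (x : 𝔤) (l : List (ℕ × 𝔤)), (∀ p ∈ l, 1 ≤ p.1) → k + (l.map Prod.fst).sum = N + 1 →
      ⁅(((X : ℂ[X]) ^ k) ⊗ₜ[ℂ] x : ℂ[X] ⊗[ℂ] 𝔤), loopWord l v⁆ = 0 := by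
  rw [mem_loopAnn_iff] at hv
  induction k, hk using Nat.le_induction with
  | base =>
    rintro x (_ | ⟨⟨j, y⟩, l⟩) hl hsum
    · simp only [List.map_nil, List.sum_nil] at hsum
      omega
    · have hvw : loopWord ((j, y) :: l) v = 0 :=
        hv j y l (hl _ List.mem_cons_self) (fun p hp => hl p (List.mem_cons_of_mem _ hp))
          (by simp only [List.map_cons, List.sum_cons] at hsum; omega)
      rw [hvw, lie_zero]
  | succ k hk ih =>
    intro x l hl hsum
    induction x using LieAlgebra.induction_on_lie_of_perfect hperf with
    | zero => rw [tmul_zero, zero_lie]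
    | add x y hx hy => rw [tmul_add, add_lie, hx, hy, add_zero]
    | lie y z =>
      have hzy : ⁅(((X : ℂ[X]) ^ k) ⊗ₜ[ℂ] y : ℂ[X] ⊗[ℂ] 𝔤),
          ⁅(((X : ℂ[X]) ^ 1) ⊗ₜ[ℂ] z : ℂ[X] ⊗[ℂ] 𝔤), loopWord l v⁆⁆ = 0 :=
        ih y ((1, z) :: l) (by simpa using hl) (by simp only [List.map_cons, List.sum_cons]; omega)
      have hyw : ⁅(((X : ℂ[X]) ^ k) ⊗ₜ[ℂ] y : ℂ[X] ⊗[ℂ] 𝔤), loopWord l v⁆ = 0 :=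
        hv k y l hk hl (by omega)
      rw [pow_tmul_lie, lie_lie, hzy, hyw, lie_zero, sub_zero]

end LoopAlgebra

/-- If `𝔤` is a perfect Lie algebra over `ℂ` (e.g. any
finite-dimensional complex simple Lie algebra) and `V` is a `𝔤[ε]`-module, then
`V(N) ⊆ V(N+1)` for all `N ≥ 1`, i.e. `V(1) ⊆ V(2) ⊆ ⋯`. -/
theorem stmt_8 (hperf : ⁅(⊤ : LieIdeal ℂ 𝔤), (⊤ : LieIdeal ℂ 𝔤)⁆ = ⊤)
    (N : ℕ) (hN : 1 ≤ N) :
    loopAnn 𝔤 V N ⊆ loopAnn 𝔤 V (N + 1) := fun _ hv =>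
  mem_loopAnn_iff.mpr fun _ x l hk hl hsum =>
    lie_loopWord_eq_zero_of_mem_loopAnn hperf hN hv hk x l hl hsum
end
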